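/- Let φ be an Orlicz function such that ∑_{n=n₁}^∞ φ(1/n) < ∞ for some n₁ ∈ ℕ. Then A_φ equals the closure, with respect to the Luxemburg norm in ces_φ, of the set of all sequences x ∈ ces_φ having only finitely many nonzero coordinates. -/

import Mathlib

open scoped ENNReal
open Filter

/-- An Orlicz function: `φ : ℝ → [0,∞]` even, convex, left continuous on `ℝ₊`,
continuous at zero, with `φ 0 = 0` and `φ u → ∞` as `u → ∞`. -/
structure OrliczFunction where
  toFun : ℝ → ℝ≥0∞
  even' : ∀ u : ℝ, toFun (-u) = toFun u
  convex' : ∀ u v t : ℝ, 0 ≤ t → t ≤ 1 →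
    toFun (t * u + (1 - t) * v) ≤ ENNReal.ofReal t * toFun u + ENNReal.ofReal (1 - t) * toFun v
  map_zero' : toFun 0 = 0
  leftContinuous' : ∀ t : ℝ, 0 < t → Tendsto toFun (nhdsWithin t (Set.Iio t)) (nhds (toFun t))
  continuousAtZero' : Tendsto toFun (nhds 0) (nhds 0)
  tendsto_top' : Tendsto toFun atTop (nhds ⊤)

/-- The Cesàro mean `σx(n) = (1/n) ∑_{j=1}^n |x j|` (with `0`-based indexing). -/
noncomputable def cesaroMean (x : ℕ → ℝ) (n : ℕ) : ℝ :=
  (∑ j ∈ Finset.range (n + 1), |x j|) / (n + 1)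

/-- The modular `ρ_φ(x) = ∑_i φ(σx(i))`. -/
noncomputable def rho (φ : OrliczFunction) (x : ℕ → ℝ) : ℝ≥0∞ :=
  ∑' n : ℕ, φ.toFun (cesaroMean x n)

/-- The Cesàro–Orlicz sequence space `ces_φ`. -/
def cesOrlicz (φ : OrliczFunction) : Set (ℕ → ℝ) :=
  {x | ∃ lam : ℝ, 0 < lam ∧ rho φ (fun i => lam * x i) < ⊤}

/-- The Luxemburg norm `‖x‖_φ = inf {λ > 0 : ρ_φ(x/λ) ≤ 1}`. -/
noncomputable def luxNorm (φ : OrliczFunction) (x : ℕ → ℝ) : ℝ :=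
  sInf {lam : ℝ | 0 < lam ∧ rho φ (fun i => x i / lam) ≤ 1}

/-- The subspace `A_φ` of `ces_φ`. -/
def Aphi (φ : OrliczFunction) : Set (ℕ → ℝ) :=
  {x | x ∈ cesOrlicz φ ∧ ∀ k : ℝ, 0 < k → ∃ nk : ℕ,
    ∑' n : ℕ, φ.toFun ((k / ((nk + n + 1 : ℕ) : ℝ)) * ∑ i ∈ Finset.range (nk + n + 1), |x i|) < ⊤}

/-- `∃ n₁, ∑_{n=n₁}^∞ φ(1/n) < ∞`. -/
def TailFinite (φ : OrliczFunction) : Prop :=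
  ∃ n₁ : ℕ, ∑' n : ℕ, φ.toFun (((n₁ + n + 1 : ℕ) : ℝ)⁻¹) < ⊤

/-- The `Δ₂`-condition at zero. -/
def Delta2Zero (φ : OrliczFunction) : Prop :=
  ∃ K : ℝ, 0 < K ∧ ∃ a : ℝ, 0 < a ∧ 0 < φ.toFun a ∧
    ∀ u : ℝ, 0 ≤ u → u ≤ a → φ.toFun (2 * u) ≤ ENNReal.ofReal K * φ.toFun u

/-- `φ` takes only finite values. -/
def FiniteValued (φ : OrliczFunction) : Prop := ∀ u : ℝ, φ.toFun u ≠ ⊤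

/-! If `x ∈ A_φ` and `k > 0`, truncating `x` far enough leaves a tail `z` with `ρ_φ(k z) ≤ 1`,
so `‖x - y‖_φ ≤ 1/k` for the finitely supported truncation `y`. Conversely, if `y` is finitely
supported and `ρ_φ((x - y)/λ) ≤ 1` for some `λ < 1/(2k)`, then
`φ(k σx(n)) ≤ φ(σ(x - y)(n)/λ) + φ(2kC/n)` where `σy(n) ≤ C/n`. The first terms sum to at most
`1`, and a tail of the second is finite: grouping `n` into blocks of length `m ≥ 2kC`, it is
dominated by `m ∑ φ(1/n)`. -/

namespace OrliczFunction

variable (φ : OrliczFunction)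

lemma apply_mul_le {t : ℝ} (u : ℝ) (h0 : 0 ≤ t) (h1 : t ≤ 1) :
    φ.toFun (t * u) ≤ ENNReal.ofReal t * φ.toFun u := by
  simpa [φ.map_zero'] using φ.convex' u 0 t h0 h1

lemma mono {s t : ℝ} (hs : 0 ≤ s) (hst : s ≤ t) : φ.toFun s ≤ φ.toFun t := by
  rcases (hs.trans hst).eq_or_lt with ht | ht
  · rw [← ht, le_antisymm (ht ▸ hst) hs]
  have h1 : s / t ≤ 1 := (div_le_one ht).mpr hst
  calc φ.toFun s = φ.toFun (s / t * t) := by rw [div_mul_cancel₀ _ ht.ne']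
    _ ≤ ENNReal.ofReal (s / t) * φ.toFun t := φ.apply_mul_le t (div_nonneg hs ht.le) h1
    _ ≤ φ.toFun t := mul_le_of_le_one_left' (ENNReal.ofReal_le_one.mpr h1)

lemma apply_add_le (a b : ℝ) : φ.toFun (a + b) ≤ φ.toFun (2 * a) + φ.toFun (2 * b) := by
  have h := φ.convex' (2 * a) (2 * b) (1 / 2) (by norm_num) (by norm_num)
  rw [show (1 / 2 : ℝ) * (2 * a) + (1 - 1 / 2) * (2 * b) = a + b by ring] at h
  refine h.trans (add_le_add ?_ ?_) <;>
    exact mul_le_of_le_one_left' (ENNReal.ofReal_le_one.mpr (by norm_num))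

lemma apply_le_add_of_le_add {a b c : ℝ} (ha : 0 ≤ a) (h : a ≤ b + c) :
    φ.toFun a ≤ φ.toFun (2 * b) + φ.toFun (2 * c) :=
  (φ.mono ha h).trans (φ.apply_add_le b c)

end OrliczFunction

section CesaroMean

variable {x y z : ℕ → ℝ}

lemma cesaroMean_nonneg (x : ℕ → ℝ) (n : ℕ) : 0 ≤ cesaroMean x n :=
  div_nonneg (Finset.sum_nonneg fun i _ => abs_nonneg _) (by positivity)

lemma cesaroMean_le_add (h : ∀ i, |z i| ≤ |x i| + |y i|) (n : ℕ) :
    cesaroMean z n ≤ cesaroMean x n + cesaroMean y n := by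
  unfold cesaroMean
  rw [← add_div, ← Finset.sum_add_distrib]
  exact div_le_div_of_nonneg_right (Finset.sum_le_sum fun i _ => h i) (by positivity)

lemma cesaroMean_le_of_abs_le (h : ∀ i, |x i| ≤ |y i|) (n : ℕ) :
    cesaroMean x n ≤ cesaroMean y n :=
  div_le_div_of_nonneg_right (Finset.sum_le_sum fun i _ => h i) (by positivity)

lemma cesaroMean_mul {c : ℝ} (hc : 0 ≤ c) (x : ℕ → ℝ) (n : ℕ) :
    cesaroMean (fun i => c * x i) n = c * cesaroMean x n := by
  simp only [cesaroMean, abs_mul, abs_of_nonneg hc, ← Finset.mul_sum, mul_div_assoc]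

lemma cesaroMean_eq_zero_of_eq_zero {n : ℕ} (h : ∀ i ≤ n, x i = 0) : cesaroMean x n = 0 := by
  rw [cesaroMean, Finset.sum_eq_zero fun i hi => by rw [h i (Finset.mem_range_succ_iff.mp hi),
    abs_zero], zero_div]

lemma exists_cesaroMean_le_of_finite (hy : {i | y i ≠ 0}.Finite) :
    ∃ C, 0 ≤ C ∧ ∀ n : ℕ, cesaroMean y n ≤ C / (n + 1) := by
  refine ⟨∑ i ∈ hy.toFinset, |y i|, Finset.sum_nonneg fun i _ => abs_nonneg _, fun n => ?_⟩
  refine div_le_div_of_nonneg_right ?_ (by positivity)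
  calc ∑ i ∈ Finset.range (n + 1), |y i|
      ≤ ∑ i ∈ Finset.range (n + 1) ∪ hy.toFinset, |y i| :=
        Finset.sum_le_sum_of_subset_of_nonneg Finset.subset_union_left fun i _ _ => abs_nonneg _
    _ = ∑ i ∈ hy.toFinset, |y i| :=
        (Finset.sum_subset Finset.subset_union_right fun i _ hi => by simpa using hi).symm

end CesaroMean

lemma mem_Aphi_iff {φ : OrliczFunction} {x : ℕ → ℝ} :
    x ∈ Aphi φ ↔ x ∈ cesOrlicz φ ∧
      ∀ k : ℝ, 0 < k → ∃ N : ℕ, ∑' n : ℕ, φ.toFun (k * cesaroMean x (N + n)) < ⊤ := by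
  have h (k : ℝ) (N n : ℕ) : k / ((N + n + 1 : ℕ) : ℝ) * ∑ i ∈ Finset.range (N + n + 1), |x i|
      = k * cesaroMean x (N + n) := by
    rw [cesaroMean]; push_cast; ring
  simp only [Aphi, Set.mem_ofPred_eq, h]

section Modular

variable (φ : OrliczFunction) {x y z : ℕ → ℝ}

lemma rho_div {c : ℝ} (hc : 0 ≤ c) (x : ℕ → ℝ) :
    rho φ (fun i => x i / c) = ∑' n, φ.toFun (c⁻¹ * cesaroMean x n) := by
  simp only [rho, div_eq_inv_mul, cesaroMean_mul (inv_nonneg.mpr hc)]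

lemma rho_mono (h : ∀ i, |x i| ≤ |y i|) : rho φ x ≤ rho φ y :=
  ENNReal.tsum_le_tsum fun n => φ.mono (cesaroMean_nonneg x n) (cesaroMean_le_of_abs_le h n)

lemma rho_mul_le {t : ℝ} (h0 : 0 ≤ t) (h1 : t ≤ 1) (x : ℕ → ℝ) :
    rho φ (fun i => t * x i) ≤ ENNReal.ofReal t * rho φ x := by
  rw [rho, rho, ← ENNReal.tsum_mul_left]
  exact ENNReal.tsum_le_tsum fun n => by rw [cesaroMean_mul h0]; exact φ.apply_mul_le _ h0 h1

lemma tsum_apply_mul_cesaroMean_le_shift {M : ℕ} (hz : ∀ i < M, z i = 0) (hzx : ∀ i, |z i| ≤ |x i|)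
    {k : ℝ} (hk : 0 ≤ k) :
    ∑' n, φ.toFun (k * cesaroMean z n) ≤ ∑' n, φ.toFun (k * cesaroMean x (n + M)) := by
  rw [← ENNReal.summable.sum_add_tsum_nat_add' (k := M), Finset.sum_eq_zero fun n hn => by
    rw [cesaroMean_eq_zero_of_eq_zero fun i hi => hz i (hi.trans_lt (Finset.mem_range.mp hn)),
      mul_zero, φ.map_zero'], zero_add]
  exact ENNReal.tsum_le_tsum fun n => φ.mono (mul_nonneg hk (cesaroMean_nonneg _ _))
    (mul_le_mul_of_nonneg_left (cesaroMean_le_of_abs_le hzx _) hk)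

lemma mem_cesOrlicz_of_abs_le (hy : y ∈ cesOrlicz φ) (h : ∀ i, |x i| ≤ |y i|) :
    x ∈ cesOrlicz φ := by
  obtain ⟨c, hc, hyc⟩ := hy
  have hcx (i : ℕ) : |c * x i| ≤ |c * y i| := by
    simpa [abs_mul] using mul_le_mul_of_nonneg_left (h i) (abs_nonneg c)
  exact ⟨c, hc, (rho_mono φ hcx).trans_lt hyc⟩

lemma sub_mem_cesOrlicz (hx : x ∈ cesOrlicz φ) (hy : y ∈ cesOrlicz φ) :
    (fun i => x i - y i) ∈ cesOrlicz φ := by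
  obtain ⟨a, ha, hxa⟩ := hx
  obtain ⟨b, hb, hyb⟩ := hy
  set c := min a b / 2 with hc_def
  have hc : 0 < c := by positivity
  have hca : 2 * c ≤ a := by linarith [min_le_left a b]
  have hcb : 2 * c ≤ b := by linarith [min_le_right a b]
  refine ⟨c, hc, lt_of_le_of_lt ?_ (ENNReal.add_lt_top.mpr ⟨hxa, hyb⟩)⟩
  rw [rho, rho, rho, ← ENNReal.tsum_add]
  refine ENNReal.tsum_le_tsum fun n => ?_
  simp only [cesaroMean_mul hc.le, cesaroMean_mul ha.le, cesaroMean_mul hb.le]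
  have hσx := cesaroMean_nonneg x n
  have hσy := cesaroMean_nonneg y n
  refine (φ.apply_le_add_of_le_add (b := c * cesaroMean x n) (c := c * cesaroMean y n)
    (mul_nonneg hc.le (cesaroMean_nonneg _ n)) ?_).trans
    (add_le_add (φ.mono (by positivity) ?_) (φ.mono (by positivity) ?_))
  · rw [← mul_add]
    exact mul_le_mul_of_nonneg_left (cesaroMean_le_add (fun i => abs_sub _ _) n) hc.le
  · nlinarith
  · nlinarith

lemma exists_rho_div_le_one (hx : x ∈ cesOrlicz φ) :
    ∃ c, 0 < c ∧ rho φ (fun i => x i / c) ≤ 1 := by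
  obtain ⟨a, ha, hxa⟩ := hx
  set R := rho φ (fun i => a * x i)
  set t := (R.toReal + 1)⁻¹
  have ht0 : 0 < t := by positivity
  have ht1 : t ≤ 1 := inv_le_one_of_one_le₀ (by linarith [R.toReal_nonneg])
  refine ⟨(t * a)⁻¹, by positivity, ?_⟩
  calc rho φ (fun i => x i / (t * a)⁻¹) = rho φ (fun i => t * (a * x i)) := by
        congr 1; ext i; rw [div_inv_eq_mul]; ring
    _ ≤ ENNReal.ofReal t * R := rho_mul_le φ ht0.le ht1 _
    _ = ENNReal.ofReal (t * R.toReal) := by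
        rw [ENNReal.ofReal_mul ht0.le, ENNReal.ofReal_toReal hxa.ne]
    _ ≤ 1 := ENNReal.ofReal_le_one.mpr <| by
        rw [inv_mul_le_iff₀ (by positivity)]; linarith

lemma luxNorm_le_of_rho_div_le_one {c : ℝ} (hc : 0 < c) (h : rho φ (fun i => x i / c) ≤ 1) :
    luxNorm φ x ≤ c :=
  csInf_le ⟨0, fun _ hl => hl.1.le⟩ ⟨hc, h⟩

lemma exists_rho_div_le_one_of_luxNorm_lt (hx : x ∈ cesOrlicz φ) {ε : ℝ} (h : luxNorm φ x < ε) :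
    ∃ c, 0 < c ∧ c < ε ∧ rho φ (fun i => x i / c) ≤ 1 := by
  obtain ⟨c, ⟨hc, hxc⟩, hcε⟩ := exists_lt_of_csInf_lt (exists_rho_div_le_one φ hx) h
  exact ⟨c, hc, hcε, hxc⟩

end Modular

lemma ENNReal.tsum_le_mul_tsum_of_le_div {m : ℕ} [NeZero m] {F G : ℕ → ℝ≥0∞}
    (h : ∀ n, F n ≤ G (n / m)) : ∑' n, F n ≤ m * ∑' a, G a :=
  calc ∑' n, F n ≤ ∑' n, G (n / m) := ENNReal.tsum_le_tsum h
    _ = ∑' p : ℕ × Fin m, G p.1 := (Nat.divModEquiv m).tsum_eq fun p => G p.1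
    _ = ∑' a, ∑' _ : Fin m, G a := ENNReal.tsum_prod'
    _ = m * ∑' a, G a := by simp [tsum_fintype, ENNReal.tsum_mul_left]

lemma TailFinite.exists_tsum_div_lt_top {φ : OrliczFunction} (h : TailFinite φ) {c : ℝ}
    (hc : 0 ≤ c) : ∃ N : ℕ, ∑' n : ℕ, φ.toFun (c / (((N + n : ℕ) : ℝ) + 1)) < ⊤ := by
  obtain ⟨n₁, hn₁⟩ := h
  set m := ⌈c⌉₊ + 1
  have hcm : c ≤ m := (Nat.le_ceil c).trans (by simp [m])
  refine ⟨m * (n₁ + 1), lt_of_le_of_lt (ENNReal.tsum_le_mul_tsum_of_le_div (m := m) fun n =>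
    φ.mono (by positivity) ?_) (ENNReal.mul_lt_top (ENNReal.natCast_lt_top m) hn₁)⟩
  have hq : ((n / m : ℕ) : ℝ) * m ≤ n := by exact_mod_cast Nat.div_mul_le_self n m
  rw [← one_div, div_le_div_iff₀ (by positivity) (by positivity)]
  push_cast
  nlinarith [(n / m : ℕ).cast_nonneg (α := ℝ), n₁.cast_nonneg (α := ℝ)]

section Approximation

variable {φ : OrliczFunction} {x : ℕ → ℝ}

lemma exists_finite_luxNorm_sub_lt (hx : x ∈ cesOrlicz φ)
    (hA : ∀ k : ℝ, 0 < k → ∃ N : ℕ, ∑' n : ℕ, φ.toFun (k * cesaroMean x (N + n)) < ⊤)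
    {ε : ℝ} (hε : 0 < ε) :
    ∃ y ∈ cesOrlicz φ, {i : ℕ | y i ≠ 0}.Finite ∧ luxNorm φ (fun i => x i - y i) < ε := by
  obtain ⟨N, hN⟩ := hA (ε / 2)⁻¹ (by positivity)
  obtain ⟨m, hm⟩ := ((ENNReal.tendsto_sum_nat_add _ hN.ne).eventually_lt_const one_pos).exists
  set y : ℕ → ℝ := fun i => if i < N + m then x i else 0
  have hyx (i : ℕ) : |y i| ≤ |x i| := by simp only [y]; split_ifs <;> simp
  have hz (i : ℕ) (hi : i < N + m) : x i - y i = 0 := by simp [y, hi]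
  have hzx (i : ℕ) : |x i - y i| ≤ |x i| := by simp only [y]; split_ifs <;> simp
  refine ⟨y, mem_cesOrlicz_of_abs_le φ hx hyx,
    (Set.finite_Iio (N + m)).subset fun i hi => not_le.mp fun h => hi (if_neg h.not_gt), ?_⟩
  refine (luxNorm_le_of_rho_div_le_one φ (half_pos hε) ?_).trans_lt (half_lt_self hε)
  rw [rho_div φ (half_pos hε).le]
  refine (tsum_apply_mul_cesaroMean_le_shift φ hz hzx (by positivity)).trans (le_of_eq_of_le ?_ hm.le)
  exact tsum_congr fun n => by rw [show n + (N + m) = N + (n + m) by omega]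

lemma TailFinite.exists_tsum_lt_top_of_approx (htail : TailFinite φ) (hx : x ∈ cesOrlicz φ)
    (happrox : ∀ ε : ℝ, 0 < ε → ∃ y ∈ cesOrlicz φ,
      {i : ℕ | y i ≠ 0}.Finite ∧ luxNorm φ (fun i => x i - y i) < ε)
    {k : ℝ} (hk : 0 < k) :
    ∃ N : ℕ, ∑' n : ℕ, φ.toFun (k * cesaroMean x (N + n)) < ⊤ := by
  obtain ⟨y, hy, hfin, hxy⟩ := happrox (2 * k)⁻¹ (by positivity)
  obtain ⟨c, hc, hck, hrho⟩ :=
    exists_rho_div_le_one_of_luxNorm_lt φ (sub_mem_cesOrlicz φ hx hy) hxy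
  obtain ⟨C, hC, hyC⟩ := exists_cesaroMean_le_of_finite hfin
  obtain ⟨N, hN⟩ := htail.exists_tsum_div_lt_top (c := 2 * k * C) (by positivity)
  set z : ℕ → ℝ := fun i => x i - y i
  have h2k : 2 * k ≤ c⁻¹ := by rw [lt_inv_comm₀ hc (by positivity)] at hck; linarith
  have hterm (j : ℕ) : φ.toFun (k * cesaroMean x j)
      ≤ φ.toFun (c⁻¹ * cesaroMean z j) + φ.toFun (2 * k * C / (j + 1)) := by
    have hσz := cesaroMean_nonneg z j
    have hσy := cesaroMean_nonneg y j
    refine (φ.apply_le_add_of_le_add (b := k * cesaroMean z j) (c := k * cesaroMean y j)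
      (mul_nonneg hk.le (cesaroMean_nonneg x j)) ?_).trans
      (add_le_add (φ.mono (by positivity) (by nlinarith)) (φ.mono (by positivity) ?_))
    · rw [← mul_add]
      refine mul_le_mul_of_nonneg_left (cesaroMean_le_add (fun i => ?_) j) hk.le
      simpa [z] using abs_add_le (x i - y i) (y i)
    · rw [mul_div_assoc, ← mul_assoc]
      exact mul_le_mul_of_nonneg_left (hyC j) (by positivity)
  refine ⟨N, ?_⟩
  calc ∑' n, φ.toFun (k * cesaroMean x (N + n))
      ≤ ∑' n, (φ.toFun (c⁻¹ * cesaroMean z (N + n))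
          + φ.toFun (2 * k * C / (((N + n : ℕ) : ℝ) + 1))) := ENNReal.tsum_le_tsum fun n => hterm _
    _ = ∑' n, φ.toFun (c⁻¹ * cesaroMean z (N + n))
          + ∑' n, φ.toFun (2 * k * C / (((N + n : ℕ) : ℝ) + 1)) := ENNReal.tsum_add
    _ ≤ rho φ (fun i => z i / c) + ∑' n, φ.toFun (2 * k * C / (((N + n : ℕ) : ℝ) + 1)) := by
        rw [rho_div φ hc.le]
        exact add_le_add_left (ENNReal.tsum_comp_le_tsum_of_injective (add_right_injective N) _) _
    _ < ⊤ := ENNReal.add_lt_top.mpr ⟨hrho.trans_lt ENNReal.one_lt_top, hN⟩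

end Approximation

/-- `A_φ` is the closure in `ces_φ` (for the Luxemburg norm)
of the finitely supported sequences in `ces_φ`. -/
theorem stmt_6 (φ : OrliczFunction) (htail : TailFinite φ) :
    Aphi φ = {x | x ∈ cesOrlicz φ ∧ ∀ ε : ℝ, 0 < ε → ∃ y ∈ cesOrlicz φ,
      {i : ℕ | y i ≠ 0}.Finite ∧ luxNorm φ (fun i => x i - y i) < ε} := by
  ext x
  rw [mem_Aphi_iff]
  exact and_congr_right fun hx =>
    ⟨fun hA _ hε => exists_finite_luxNorm_sub_lt hx hA hε,
      fun happrox _ hk => htail.exists_tsum_lt_top_of_approx hx happrox hk⟩
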